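/- arXiv:0903.4495 — 2 statements merged into one kernel-verified Lean document; each statement's English description precedes it below -/
import Mathlib

section
/- For every integer p and all natural numbers q, r, the determinants satisfy the recurrence b(p, q, r+2) = 2·b(p, q, r+1) − b(p, q, r). -/
/-- Entry function for the matrix `B(p,q,r)` from the paper. -/
def Bent (p : ℤ) (q r : ℕ) (i j : ℕ) : ℤ :=
  if i = 0 ∧ j = 0 then -2 * p
  else if i = j ∧ (i = 1 ∨ i = 2) then 1 - 2 * p
  else if i ≤ 2 ∧ j ≤ 2 then p
  else if 3 ≤ i ∧ i = j then 2
  else if 3 ≤ min i j ∧ max i j ≤ 2 + q ∧ max i j = min i j + 1 then -1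
  else if 3 + q ≤ min i j ∧ max i j ≤ 2 + q + r ∧ max i j = min i j + 1 then -1
  else if 1 ≤ q ∧ ((i = 2 ∧ j = 3) ∨ (i = 3 ∧ j = 2)) then -1
  else if 1 ≤ r ∧ ((i = 1 ∧ j = 3 + q) ∨ (i = 3 + q ∧ j = 1)) then -1
  else 0

/-- The matrix `B(p,q,r)`: a symmetric `(3+q+r) × (3+q+r)` integer matrix. -/
def Bmat (p : ℤ) (q r : ℕ) : Matrix (Fin (3 + q + r)) (Fin (3 + q + r)) ℤ :=
  fun i j => Bent p q r i.val j.val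

/-- `b(p,q,r) = det B(p,q,r)`. -/
def bdet (p : ℤ) (q r : ℕ) : ℤ := (Bmat p q r).det

set_option linter.unreachableTactic false
set_option linter.unusedTactic false

lemma Bent_stable (p : ℤ) (q r s : ℕ) (i j : ℕ)
    (hi : i ≤ 2+q+r) (hj : j ≤ 2+q+r) (hrs : r ≤ s) :
    Bent p q s i j = Bent p q r i j := by
  unfold Bent
  split_ifs <;> first | rfl | omega | tauto

lemma Bent_z1 (p : ℤ) (q r : ℕ) (j : ℕ) (hj : j ≤ 2+q+r) :
    Bent p q (r+2) (3+q+r+1) j = 0 := by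
  unfold Bent; split_ifs <;> first | omega | tauto

lemma Bent_z2 (p : ℤ) (q r : ℕ) (i : ℕ) (hi : i ≤ 2+q+r) :
    Bent p q (r+2) i (3+q+r+1) = 0 := by
  unfold Bent; split_ifs <;> first | omega | tauto

lemma Bent_diag (p : ℤ) (q r : ℕ) : Bent p q (r+2) (3+q+r+1) (3+q+r+1) = 2 := by
  unfold Bent; split_ifs <;> first | omega | tauto

lemma Bent_sub (p : ℤ) (q r : ℕ) : Bent p q (r+2) (3+q+r+1) (3+q+r) = -1 := by
  unfold Bent; split_ifs <;> first | omega | tauto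

lemma Bent_sup (p : ℤ) (q r : ℕ) : Bent p q (r+2) (3+q+r) (3+q+r+1) = -1 := by
  unfold Bent; split_ifs <;> first | omega | tauto

theorem b_recurrence_r (p : ℤ) (q r : ℕ) :
    bdet p q (r + 2) = 2 * bdet p q (r + 1) - bdet p q r := by
  have hsA : ∀ k : Fin (3+q+r+1),
      ((((Fin.last (3+q+r)).castSucc).succAbove k) : ℕ)
        = if (k:ℕ) < 3+q+r then (k:ℕ) else (k:ℕ)+1 := by
    intro k
    simp [Fin.succAbove, Fin.lt_def, apply_ite Fin.val]
  -- minor 1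
  have hminor1 : (Bmat p q (r+2)).submatrix
      (Fin.castSucc : Fin (3+q+r+1) → Fin (3+q+r+2)) Fin.castSucc = Bmat p q (r+1) := by
    ext i j
    show Bent p q (r+2) i.val j.val = Bent p q (r+1) i.val j.val
    exact Bent_stable p q (r+1) (r+2) _ _
      (by have h : (i:ℕ) < 3+q+r+1 := i.isLt; omega)
      (by have h : (j:ℕ) < 3+q+r+1 := j.isLt; omega) (by omega)
  -- minor 3
  have hminor3 : ((Bmat p q (r+2)).submatrix
        (Fin.castSucc : Fin (3+q+r+1) → Fin (3+q+r+2))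
        ((Fin.last (3+q+r)).castSucc.succAbove)).submatrix
        (Fin.castSucc : Fin (3+q+r) → Fin (3+q+r+1)) Fin.castSucc = Bmat p q r := by
    ext i j
    simp only [Matrix.submatrix_apply, Bmat, Fin.coe_castSucc, hsA]
    rw [if_pos (show ((j:ℕ)) < 3+q+r from j.isLt)]
    exact Bent_stable p q r (r+2) _ _ (by have := i.isLt; omega)
      (by have := j.isLt; omega) (by omega)
  -- first expansion
  have e1 := Matrix.det_succ_row (n := 3+q+r+1) (Bmat p q (r+2)) (Fin.last (3+q+r+1))
  rw [Fin.sum_univ_castSucc, Fin.sum_univ_castSucc] at e1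
  simp only [Fin.succAbove_last, Fin.val_last, Fin.coe_castSucc] at e1
  have E0 : ∀ x : Fin (3+q+r),
      Bmat p q (r+2) (Fin.last (3+q+r+1)) x.castSucc.castSucc = 0 := fun x =>
    Bent_z1 p q r x.val (by have := x.isLt; omega)
  have E1 : Bmat p q (r+2) (Fin.last (3+q+r+1)) (Fin.last (3+q+r)).castSucc = -1 :=
    Bent_sub p q r
  have E2 : Bmat p q (r+2) (Fin.last (3+q+r+1)) (Fin.last (3+q+r+1)) = 2 :=
    Bent_diag p q r
  have hs1 : (-1:ℤ)^(3+q+r+1+(3+q+r)) = -1 := Odd.neg_one_pow ⟨3+q+r, by ring⟩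
  have hs2 : (-1:ℤ)^(3+q+r+1+(3+q+r+1)) = 1 := Even.neg_one_pow ⟨3+q+r+1, rfl⟩
  simp only [E0, E1, E2, hs1, hs2, mul_zero, zero_mul, Finset.sum_const_zero, zero_add,
    hminor1] at e1
  -- second expansion
  have e2 := Matrix.det_succ_column (n := 3+q+r)
    ((Bmat p q (r+2)).submatrix
      (Fin.castSucc : Fin (3+q+r+1) → Fin (3+q+r+2))
      ((Fin.last (3+q+r)).castSucc.succAbove)) (Fin.last (3+q+r))
  rw [Fin.sum_univ_castSucc] at e2
  simp only [Fin.succAbove_last, Fin.val_last, Fin.coe_castSucc] at e2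
  have hcol : (((Fin.last (3+q+r)).castSucc).succAbove (Fin.last (3+q+r)) : ℕ) = 3+q+r+1 := by
    rw [hsA]; simp
  have F0 : ∀ i : Fin (3+q+r),
      ((Bmat p q (r+2)).submatrix
        (Fin.castSucc : Fin (3+q+r+1) → Fin (3+q+r+2))
        ((Fin.last (3+q+r)).castSucc.succAbove)) i.castSucc (Fin.last (3+q+r)) = 0 := by
    intro i
    simp only [Matrix.submatrix_apply, Bmat, Fin.coe_castSucc, hcol]
    exact Bent_z2 p q r i.val (by have := i.isLt; omega)
  have F1 : ((Bmat p q (r+2)).submatrix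
        (Fin.castSucc : Fin (3+q+r+1) → Fin (3+q+r+2))
        ((Fin.last (3+q+r)).castSucc.succAbove)) (Fin.last (3+q+r)) (Fin.last (3+q+r)) = -1 := by
    simp only [Matrix.submatrix_apply, Bmat, Fin.coe_castSucc, Fin.val_last, hcol]
    exact Bent_sup p q r
  have hs3 : (-1:ℤ)^((3+q+r)+(3+q+r)) = 1 := Even.neg_one_pow ⟨3+q+r, rfl⟩
  simp only [F0, F1, hs3, mul_zero, zero_mul, Finset.sum_const_zero, zero_add,
    hminor3] at e2
  have e2' : ((Bmat p q (r+2)).submatrix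
      (Fin.castSucc : Fin (3+q+r+1) → Fin (3+q+r+2))
      ((Fin.last (3+q+r)).castSucc.succAbove)).det = 1 * -1 * bdet p q r := e2
  have e1' : bdet p q (r+2) = -1 * -1 * ((Bmat p q (r+2)).submatrix
      (Fin.castSucc : Fin (3+q+r+1) → Fin (3+q+r+2))
      ((Fin.last (3+q+r)).castSucc.succAbove)).det + 1 * 2 * bdet p q (r+1) := e1
  rw [e1', e2']
  ring
end

section
/- For every integer p and all natural numbers q, r, the determinants satisfy the recurrence c(p, q+2, r) = 2·c(p, q+1, r) − c(p, q, r). -/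
/-- Entry function for the matrix `C(p,q,r)` from the paper. -/
def Cent (p : ℤ) (q r : ℕ) (i j : ℕ) : ℤ :=
  if i = j ∧ i ≤ 1 then 1 - 2 * p
  else if i ≤ 1 ∧ j ≤ 1 then p
  else if 2 ≤ i ∧ i = j then 2
  else if 2 ≤ min i j ∧ max i j ≤ 1 + q ∧ max i j = min i j + 1 then -1
  else if 2 + q ≤ min i j ∧ max i j ≤ 1 + q + r ∧ max i j = min i j + 1 then -1
  else if 1 ≤ q ∧ ((i = 1 ∧ j = 2) ∨ (i = 2 ∧ j = 1)) then -1
  else if 1 ≤ r ∧ ((i = 0 ∧ j = 2 + q) ∨ (i = 2 + q ∧ j = 0)) then -1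
  else 0

/-- The matrix `C(p,q,r)`: a symmetric `(2+q+r) × (2+q+r)` integer matrix. -/
def Cmat (p : ℤ) (q r : ℕ) : Matrix (Fin (2 + q + r)) (Fin (2 + q + r)) ℤ :=
  fun i j => Cent p q r i.val j.val

/-- `c(p,q,r) = det C(p,q,r)`. -/
def cdet (p : ℤ) (q r : ℕ) : ℤ := (Cmat p q r).det

def Dmat (p : ℤ) (q r n : ℕ) : Matrix (Fin n) (Fin n) ℤ :=
  fun i j => Cent p q r i.val j.val

lemma det_Dmat_cast (p : ℤ) (q r : ℕ) {n m : ℕ} (h : n = m) :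
    (Dmat p q r n).det = (Dmat p q r m).det := by subst h; rfl

lemma cdet_eq_Dmat (p : ℤ) (q r : ℕ) : cdet p q r = (Dmat p q r (2+q+r)).det := rfl

lemma val_succAbove {n : ℕ} (a : Fin (n+1)) (k : Fin n) :
    ((a.succAbove k : Fin (n+1)) : ℕ) = if (k : ℕ) < (a : ℕ) then (k : ℕ) else (k : ℕ) + 1 := by
  rw [Fin.succAbove]
  split_ifs with h1 h2 h2 <;> simp_all [Fin.lt_def, Fin.coe_castSucc, Fin.val_succ]

lemma cent_congr (p : ℤ) {q1 r1 q2 r2 i1 j1 i2 j2 : ℕ}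
    (c1 : (i1 = j1 ∧ i1 ≤ 1) ↔ (i2 = j2 ∧ i2 ≤ 1))
    (c2 : (i1 ≤ 1 ∧ j1 ≤ 1) ↔ (i2 ≤ 1 ∧ j2 ≤ 1))
    (c3 : (2 ≤ i1 ∧ i1 = j1) ↔ (2 ≤ i2 ∧ i2 = j2))
    (c4 : (2 ≤ min i1 j1 ∧ max i1 j1 ≤ 1 + q1 ∧ max i1 j1 = min i1 j1 + 1) ↔
          (2 ≤ min i2 j2 ∧ max i2 j2 ≤ 1 + q2 ∧ max i2 j2 = min i2 j2 + 1))
    (c5 : (2 + q1 ≤ min i1 j1 ∧ max i1 j1 ≤ 1 + q1 + r1 ∧ max i1 j1 = min i1 j1 + 1) ↔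
          (2 + q2 ≤ min i2 j2 ∧ max i2 j2 ≤ 1 + q2 + r2 ∧ max i2 j2 = min i2 j2 + 1))
    (c6 : (1 ≤ q1 ∧ ((i1 = 1 ∧ j1 = 2) ∨ (i1 = 2 ∧ j1 = 1))) ↔
          (1 ≤ q2 ∧ ((i2 = 1 ∧ j2 = 2) ∨ (i2 = 2 ∧ j2 = 1))))
    (c7 : (1 ≤ r1 ∧ ((i1 = 0 ∧ j1 = 2 + q1) ∨ (i1 = 2 + q1 ∧ j1 = 0))) ↔
          (1 ≤ r2 ∧ ((i2 = 0 ∧ j2 = 2 + q2) ∨ (i2 = 2 + q2 ∧ j2 = 0)))) :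
    Cent p q1 r1 i1 j1 = Cent p q2 r2 i2 j2 := by
  unfold Cent
  simp only [c1, c2, c3, c4, c5, c6, c7]

set_option maxHeartbeats 1000000 in
lemma cent_row_zero (p : ℤ) (q r : ℕ) {j : ℕ} (h1 : j ≠ q+2) (h2 : j ≠ q+3) :
    Cent p (q+2) r (q+3) j = 0 := by
  unfold Cent
  simp only [Nat.min_def, Nat.max_def]
  split_ifs <;> try omega
  all_goals (exfalso; simp_all)
  all_goals omega

set_option maxHeartbeats 1000000 in
lemma cent_col_zero (p : ℤ) (q r : ℕ) {x : ℕ} (h1 : x ≠ q+2) (h2 : x ≠ q+3) :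
    Cent p (q+2) r x (q+3) = 0 := by
  unfold Cent
  simp only [Nat.min_def, Nat.max_def]
  split_ifs <;> try omega
  all_goals (exfalso; simp_all)
  all_goals omega

set_option maxHeartbeats 1000000 in
lemma cent_diag (p : ℤ) (q r : ℕ) : Cent p (q+2) r (q+3) (q+3) = 2 := by
  unfold Cent
  simp only [Nat.min_def, Nat.max_def]
  split_ifs <;> try omega
  all_goals (exfalso; simp_all)
  all_goals omega

set_option maxHeartbeats 1000000 in
lemma cent_sub (p : ℤ) (q r : ℕ) : Cent p (q+2) r (q+3) (q+2) = -1 := by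
  unfold Cent
  simp only [Nat.min_def, Nat.max_def]
  split_ifs <;> try omega
  all_goals (exfalso; simp_all)
  all_goals omega

set_option maxHeartbeats 1000000 in
lemma cent_sup (p : ℤ) (q r : ℕ) : Cent p (q+2) r (q+2) (q+3) = -1 := by
  unfold Cent
  simp only [Nat.min_def, Nat.max_def]
  split_ifs <;> try omega
  all_goals (exfalso; simp_all)
  all_goals omega

lemma centE1 (p : ℤ) (q r : ℕ) (i j : ℕ) :
    Cent p (q+2) r (if i < q+3 then i else i+1) (if j < q+3 then j else j+1)
      = Cent p (q+1) r i j := by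
  rcases lt_or_ge i (q+3) with h1 | h1 <;> rcases lt_or_ge j (q+3) with h2 | h2 <;>
    [rw [if_pos h1, if_pos h2]; rw [if_pos h1, if_neg (not_lt.mpr h2)];
     rw [if_neg (not_lt.mpr h1), if_pos h2]; rw [if_neg (not_lt.mpr h1), if_neg (not_lt.mpr h2)]] <;>
    (apply cent_congr <;> omega)

lemma centE2 (p : ℤ) (q r : ℕ) (i j : ℕ) :
    Cent p (q+2) r (if i < q+2 then i else i+2) (if j < q+2 then j else j+2)
      = Cent p q r i j := by
  rcases lt_or_ge i (q+2) with h1 | h1 <;> rcases lt_or_ge j (q+2) with h2 | h2 <;>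
    [rw [if_pos h1, if_pos h2]; rw [if_pos h1, if_neg (not_lt.mpr h2)];
     rw [if_neg (not_lt.mpr h1), if_pos h2]; rw [if_neg (not_lt.mpr h1), if_neg (not_lt.mpr h2)]] <;>
    (apply cent_congr <;> omega)

theorem c_recurrence_q (p : ℤ) (q r : ℕ) :
    cdet p (q + 2) r = 2 * cdet p (q + 1) r - cdet p q r := by
  have h4 : 2+(q+2)+r = q+r+3+1 := by omega
  have h3 : 2+(q+1)+r = q+r+2+1 := by omega
  have h2 : 2+q+r = q+r+1+1 := by omega
  rw [cdet_eq_Dmat p (q+2) r, cdet_eq_Dmat p (q+1) r, cdet_eq_Dmat p q r,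
      det_Dmat_cast p (q+2) r h4, det_Dmat_cast p (q+1) r h3, det_Dmat_cast p q r h2]
  set M : Matrix (Fin (q+r+3+1)) (Fin (q+r+3+1)) ℤ := Dmat p (q+2) r (q+r+3+1) with hM
  set i3 : Fin (q+r+3+1) := ⟨q+3, by omega⟩ with hi3
  set i2 : Fin (q+r+3+1) := ⟨q+2, by omega⟩ with hi2
  rw [Matrix.det_succ_row M i3]
  rw [Finset.sum_eq_add_of_mem i2 i3 (Finset.mem_univ _) (Finset.mem_univ _)
      (by simp [hi2, hi3, Fin.ext_iff])
      (fun c _ hc => by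
        have hc2 : (c : ℕ) ≠ q+2 := fun h => hc.1 (Fin.ext h)
        have hc3 : (c : ℕ) ≠ q+3 := fun h => hc.2 (Fin.ext h)
        have : M i3 c = 0 := cent_row_zero p q r hc2 hc3
        rw [this, mul_zero, zero_mul])]
  -- entries
  have e33 : M i3 i3 = 2 := cent_diag p q r
  have e32 : M i3 i2 = -1 := cent_sub p q r
  -- minor B
  have hB : (M.submatrix i3.succAbove i3.succAbove).det = (Dmat p (q+1) r (q+r+2+1)).det := by
    congr 1
    ext a b
    show Cent p (q+2) r (i3.succAbove a : ℕ) (i3.succAbove b : ℕ) = Cent p (q+1) r a b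
    rw [val_succAbove, val_succAbove]
    exact centE1 p q r a b
  -- minor A
  have hA : (M.submatrix i3.succAbove i2.succAbove).det = -(Dmat p q r (q+r+1+1)).det := by
    set A := M.submatrix i3.succAbove i2.succAbove with hAdef
    set j2 : Fin (q+r+2+1) := ⟨q+2, by omega⟩ with hj2
    rw [Matrix.det_succ_column A j2]
    rw [Finset.sum_eq_single_of_mem j2 (Finset.mem_univ _)
        (fun b _ hb => by
          have hb2 : (b : ℕ) ≠ q+2 := fun h => hb (Fin.ext h)
          have hvi3 : (i3 : ℕ) = q+3 := rfl
          have hv : (i3.succAbove b : ℕ) ≠ q+2 := by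
            rw [val_succAbove, hvi3]; split_ifs <;> omega
          have hv3 : (i3.succAbove b : ℕ) ≠ q+3 := by
            rw [val_succAbove, hvi3]; split_ifs <;> omega
          have hcol : (i2.succAbove j2 : ℕ) = q+3 := by
            rw [val_succAbove]; simp [hi2, hj2]
          have : A b j2 = 0 := by
            show Cent p (q+2) r (i3.succAbove b : ℕ) (i2.succAbove j2 : ℕ) = 0
            rw [hcol]; exact cent_col_zero p q r hv hv3
          rw [this, mul_zero, zero_mul])]
    have eA : A j2 j2 = -1 := by
      show Cent p (q+2) r (i3.succAbove j2 : ℕ) (i2.succAbove j2 : ℕ) = -1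
      have hr : (i3.succAbove j2 : ℕ) = q+2 := by rw [val_succAbove]; simp [hi3, hj2]
      have hcol : (i2.succAbove j2 : ℕ) = q+3 := by rw [val_succAbove]; simp [hi2, hj2]
      rw [hr, hcol]; exact cent_sup p q r
    have hA' : (A.submatrix j2.succAbove j2.succAbove).det = (Dmat p q r (q+r+1+1)).det := by
      congr 1
      ext a b
      show Cent p (q+2) r (i3.succAbove (j2.succAbove a) : ℕ)
            (i2.succAbove (j2.succAbove b) : ℕ) = Cent p q r a b
      have hrow : (i3.succAbove (j2.succAbove a) : ℕ) = if (a:ℕ) < q+2 then (a:ℕ) else (a:ℕ)+2 := by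
        rw [val_succAbove, val_succAbove]
        simp only [hi3, hj2]
        split_ifs <;> omega
      have hcol : (i2.succAbove (j2.succAbove b) : ℕ) = if (b:ℕ) < q+2 then (b:ℕ) else (b:ℕ)+2 := by
        rw [val_succAbove, val_succAbove]
        simp only [hi2, hj2]
        split_ifs <;> omega
      rw [hrow, hcol]
      exact centE2 p q r a b
    rw [eA, hA']
    have hsgn : ((j2:ℕ) + (j2:ℕ)) = 2*(q+2) := by simp [hj2]; omega
    rw [hsgn, pow_mul, neg_one_sq, one_pow]
    ring
  rw [e33, e32, hB, hA]
  have s1 : ((i3:ℕ) + (i2:ℕ)) = 2*(q+2)+1 := by simp [hi3, hi2]; omega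
  have s2 : ((i3:ℕ) + (i3:ℕ)) = 2*(q+3) := by simp [hi3]; omega
  rw [s1, s2, pow_succ, pow_mul, pow_mul, neg_one_sq, one_pow, one_pow]
  ring
end
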